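/- arXiv:2007.12082 — 4 statements merged into one kernel-verified Lean document; each statement's English description precedes it below -/
import Mathlib

section
/- Let w, h > 0 and let A = [x1, x1+w] × [y1, y1+h] and B = [x2, x2+w] × [y2, y2+h] be two congruent axis-aligned closed rectangles in ℝ². Then CAr(A,B) = max(0, w − |x1 − x2|) · max(0, h − |y1 − y2|) / (w·h). In particular, for boxes of the same size CAr decreases to 0 as the boxes are translated apart, so CAr retains sensitivity to inaccurate positioning. -/
open MeasureTheory

/-- The Cover Area rate of two congruent axis-aligned closed rectangles of
width `w` and height `h`:
`CAr(A,B) = max 0 (w - |x1 - x2|) * max 0 (h - |y1 - y2|) / (w * h)`.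
In particular it decreases to `0` as the boxes are translated apart, so CAr
retains sensitivity to inaccurate positioning. -/
theorem CAr_congruent_rects
    (w h x1 y1 x2 y2 : ℝ) (hw : 0 < w) (hh : 0 < h) :
    MeasureTheory.volume
        ((Set.Icc x1 (x1 + w) ×ˢ Set.Icc y1 (y1 + h)) ∩
          (Set.Icc x2 (x2 + w) ×ˢ Set.Icc y2 (y2 + h))) /
      min (MeasureTheory.volume (Set.Icc x1 (x1 + w) ×ˢ Set.Icc y1 (y1 + h)))
          (MeasureTheory.volume (Set.Icc x2 (x2 + w) ×ˢ Set.Icc y2 (y2 + h))) =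
      ENNReal.ofReal (max 0 (w - |x1 - x2|) * max 0 (h - |y1 - y2|) / (w * h)) := by
  have hlen : ∀ a b c : ℝ, min (a + c) (b + c) - max a b = c - |a - b| := by
    intro a b c
    rcases le_total a b with hab | hab
    · rw [abs_of_nonpos (by linarith), max_eq_right hab, min_eq_left (by linarith)]
      ring
    · rw [abs_of_nonneg (by linarith), max_eq_left hab, min_eq_right (by linarith)]
      ring
  rw [Set.prod_inter_prod, Set.Icc_inter_Icc, Set.Icc_inter_Icc,
    MeasureTheory.Measure.volume_eq_prod, Measure.prod_prod, Measure.prod_prod,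
    Measure.prod_prod, Real.volume_Icc, Real.volume_Icc, Real.volume_Icc,
    Real.volume_Icc, Real.volume_Icc, Real.volume_Icc, hlen, hlen]
  have e1 : ∀ a : ℝ, a + w - a = w := fun a => by ring
  have e2 : ∀ a : ℝ, a + h - a = h := fun a => by ring
  rw [e1, e1, e2, e2]
  have hwh : ENNReal.ofReal w * ENNReal.ofReal h = ENNReal.ofReal (w * h) :=
    (ENNReal.ofReal_mul hw.le).symm
  rw [hwh, min_self]
  have h1 : ENNReal.ofReal (w - |x1 - x2|) = ENNReal.ofReal (max 0 (w - |x1 - x2|)) := by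
    rcases le_total (w - |x1 - x2|) 0 with hc | hc
    · rw [max_eq_left hc, ENNReal.ofReal_eq_zero.mpr hc, ENNReal.ofReal_zero]
    · rw [max_eq_right hc]
  have h2 : ENNReal.ofReal (h - |y1 - y2|) = ENNReal.ofReal (max 0 (h - |y1 - y2|)) := by
    rcases le_total (h - |y1 - y2|) 0 with hc | hc
    · rw [max_eq_left hc, ENNReal.ofReal_eq_zero.mpr hc, ENNReal.ofReal_zero]
    · rw [max_eq_right hc]
  rw [h1, h2, ← ENNReal.ofReal_mul (le_max_left _ _),
    ENNReal.ofReal_div_of_pos (mul_pos hw hh)]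
end

section
/- Fix real numbers XP > 0 and XR > 0. The function μ ↦ F^(μ)(XP,XR) = XP^(2(1−μ)) · XR^(2μ) / ((1−μ)·XP + μ·XR) is convex on the interval [0,1]. -/
/-!
Writing `L(μ) = (1 − μ)·XP + μ·XR`, we have `F^(μ) = exp(2·((1 − μ) log XP + μ log XR)) / L(μ)`:
an exponential of an affine function divided by a positive affine function. Its logarithm is
affine minus `log ∘ L`, which is convex because `log` is concave, and the exponential of a convex
function is convex.
-/

/-- The biased Extended F-score
`F^(μ)(XP,XR) = XP^(2(1−μ)) · XR^(2μ) / ((1−μ)·XP + μ·XR)`. -/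
noncomputable def Fext (μ XP XR : ℝ) : ℝ :=
  XP ^ (2 * (1 - μ)) * XR ^ (2 * μ) / ((1 - μ) * XP + μ * XR)

open Real Set

theorem ConvexOn.exp_comp {E : Type*} [AddCommMonoid E] [Module ℝ E] {s : Set E} {f : E → ℝ}
    (hf : ConvexOn ℝ s f) : ConvexOn ℝ s (exp ∘ f) :=
  ⟨hf.1, fun _ hx _ hy _ _ ha hb hab =>
    (exp_le_exp.2 (hf.2 hx hy ha hb hab)).trans
      (convexOn_exp.2 (mem_univ _) (mem_univ _) ha hb hab)⟩

namespace AffineMap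

variable {E : Type*} [AddCommGroup E] [Module ℝ E]

theorem convexOn_neg_log_comp (h : E →ᵃ[ℝ] ℝ) :
    ConvexOn ℝ (h ⁻¹' Ioi 0) (fun x => -log (h x)) :=
  strictConcaveOn_log_Ioi.concaveOn.neg.comp_affineMap h

theorem convexOn_exp_div (g h : E →ᵃ[ℝ] ℝ) :
    ConvexOn ℝ (h ⁻¹' Ioi 0) (fun x => exp (g x) / h x) := by
  have hexponent : ConvexOn ℝ (h ⁻¹' Ioi 0) (fun x => g x + -log (h x)) :=
    (((convexOn_id convex_univ).comp_affineMap g).subset (subset_univ _)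
      h.convexOn_neg_log_comp.1).add h.convexOn_neg_log_comp
  refine hexponent.exp_comp.congr fun x hx => ?_
  simp only [Function.comp_apply, exp_add, exp_neg, exp_log hx, div_eq_mul_inv]

end AffineMap

theorem Fext_eq_exp_div (μ : ℝ) {XP XR : ℝ} (hXP : 0 < XP) (hXR : 0 < XR) :
    Fext μ XP XR =
      exp (2 * AffineMap.lineMap (log XP) (log XR) μ) / AffineMap.lineMap XP XR μ := by
  simp only [Fext, AffineMap.lineMap_apply_module, smul_eq_mul, rpow_def_of_pos hXP,
    rpow_def_of_pos hXR, ← exp_add]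
  ring_nf

/-- For fixed `XP, XR > 0`, the map `μ ↦ F^(μ)(XP,XR)` is convex on `[0,1]`. -/
theorem Fext_convexOn (XP XR : ℝ) (hXP : 0 < XP) (hXR : 0 < XR) :
    ConvexOn ℝ (Set.Icc (0 : ℝ) 1) (fun μ => Fext μ XP XR) := by
  have hpos : Icc (0 : ℝ) 1 ⊆ AffineMap.lineMap XP XR ⁻¹' Ioi 0 := fun μ ⟨h0, h1⟩ => by
    simpa [AffineMap.lineMap_apply_module] using
      convex_Ioi (0 : ℝ) hXP hXR (sub_nonneg.2 h1) h0 (sub_add_cancel 1 μ)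
  refine ((AffineMap.convexOn_exp_div (2 • AffineMap.lineMap (log XP) (log XR)) _).subset hpos
    (convex_Icc 0 1)).congr fun μ _ => ?_
  simp [Fext_eq_exp_div μ hXP hXR]
end

section
/- Let G ≥ 1 and N ≥ 1 be integers. Then the set of rational numbers { T_G(n,k) : 1 ≤ n ≤ N, 1 ≤ k ≤ G·(G+1)^(n−1) }, where T_G(n,k) = (k + ⌊(k−1)/G⌋)/(G+1)^n, is equal to the set { j/(G+1)^N : j an integer, 1 ≤ j ≤ (G+1)^N − 1 }. In particular, together with the endpoints 0 and 1, the topological orders of the points of the N-th intermediate curve C^(N) form an equally spaced grid in [0,1], and the difference of topological order between adjacent points of C^(N) is exactly 1/(G+1)^N = T_G(N,1). -/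
/-!
Write `k - 1 = G * s + (r - 1)` with `1 ≤ r ≤ G`. Then `k + ⌊(k - 1)/G⌋ = (G + 1) * s + r`, so the
numerators of the points inserted at iteration `n` are exactly the integers below `(G + 1)^n`
that are not divisible by `G + 1`. Every `j` with `0 < j < (G + 1)^N` is of the form
`(G + 1)^(N - n) * m` with `1 ≤ n ≤ N` and `G + 1 ∤ m`, i.e. `j / (G + 1)^N = m / (G + 1)^n`.
-/

theorem Nat.mul_add_le_mul_iff_lt {b r s P : ℕ} (hr : 1 ≤ r) (hrb : r ≤ b) :
    b * s + r ≤ b * P ↔ s < P := by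
  constructor
  · intro h
    by_contra! hPs
    have : b * P ≤ b * s := Nat.mul_le_mul_left b hPs
    omega
  · intro h
    calc b * s + r ≤ b * (s + 1) := by rw [mul_add_one]; omega
      _ ≤ b * P := Nat.mul_le_mul_left b h

theorem Nat.mul_add_add_pred_div {G r : ℕ} (s : ℕ) (hr : 1 ≤ r) (hrG : r ≤ G) :
    G * s + r + (G * s + r - 1) / G = (G + 1) * s + r := by
  have hdiv : (G * s + r - 1) / G = s := by
    rw [show G * s + r - 1 = G * s + (r - 1) by omega, Nat.mul_add_div (by omega),
      Nat.div_eq_of_lt (by omega), add_zero]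
  rw [hdiv]
  ring

theorem Nat.exists_add_pred_div_eq_iff (G P m : ℕ) :
    (∃ k, 1 ≤ k ∧ k ≤ G * P ∧ k + (k - 1) / G = m) ↔ m < (G + 1) * P ∧ ¬ (G + 1) ∣ m := by
  constructor
  · rintro ⟨k, hk1, hkP, rfl⟩
    have hG : 0 < G := Nat.pos_of_ne_zero fun h => by simp [h] at hkP; omega
    obtain ⟨s, r, hr, hrG, rfl⟩ : ∃ s r, 1 ≤ r ∧ r ≤ G ∧ k = G * s + r :=
      ⟨(k - 1) / G, (k - 1) % G + 1, by omega, Nat.mod_lt _ hG,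
        by have := Nat.div_add_mod (k - 1) G; omega⟩
    rw [Nat.mul_add_le_mul_iff_lt hr hrG] at hkP
    rw [Nat.mul_add_add_pred_div s hr hrG, Nat.dvd_iff_mod_eq_zero, Nat.mul_add_mod,
      Nat.mod_eq_of_lt (by omega)]
    have := (Nat.mul_add_le_mul_iff_lt (b := G + 1) (r := r + 1) (by omega) (by omega)).2 hkP
    omega
  · rintro ⟨hmP, hm⟩
    obtain ⟨s, r, hr, hrG, rfl⟩ : ∃ s r, 1 ≤ r ∧ r ≤ G ∧ m = (G + 1) * s + r := by
      refine ⟨m / (G + 1), m % (G + 1), Nat.pos_of_ne_zero fun h => hm ?_,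
        Nat.le_of_lt_succ (Nat.mod_lt _ (by omega)), (Nat.div_add_mod m (G + 1)).symm⟩
      exact Nat.dvd_of_mod_eq_zero h
    refine ⟨G * s + r, by omega, ?_, Nat.mul_add_add_pred_div s hr hrG⟩
    rw [Nat.mul_add_le_mul_iff_lt hr hrG,
      ← Nat.mul_add_le_mul_iff_lt (b := G + 1) (r := r + 1) (by omega) (by omega)]
    omega

-- `N - n` is the `b`-adic valuation of `j`.
theorem Nat.exists_not_dvd_mul_pow_eq_iff (b N j : ℕ) :
    (∃ n m, 1 ≤ n ∧ n ≤ N ∧ m < b ^ n ∧ ¬ b ∣ m ∧ j = m * b ^ (N - n)) ↔ 0 < j ∧ j < b ^ N := by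
  constructor
  · rintro ⟨n, m, hn, hnN, hmn, hbm, rfl⟩
    have hm : 0 < m := Nat.pos_of_ne_zero fun h => hbm (h ▸ dvd_zero b)
    have hb : 0 < b := Nat.pos_of_ne_zero <| by
      rintro rfl
      rw [zero_pow (by omega)] at hmn
      omega
    have hpow : 0 < b ^ (N - n) := pow_pos hb _
    refine ⟨Nat.mul_pos hm hpow, ?_⟩
    calc m * b ^ (N - n) < b ^ n * b ^ (N - n) := Nat.mul_lt_mul_of_pos_right hmn hpow
      _ = b ^ N := by rw [← pow_add, Nat.add_sub_cancel' hnN]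
  · rintro ⟨hj, hjN⟩
    have hb : 1 < b := by
      by_contra! hb
      interval_cases b <;> cases N <;> simp at hjN <;> omega
    obtain ⟨e, m, hbm, rfl⟩ := Nat.exists_eq_pow_mul_and_not_dvd hj.ne' b hb.ne'
    have hm : 0 < m := Nat.pos_of_ne_zero fun h => hbm (h ▸ dvd_zero b)
    have heN : e < N := (Nat.pow_lt_pow_iff_right hb).1 <|
      (Nat.le_mul_of_pos_right _ hm).trans_lt hjN
    refine ⟨N - e, m, by omega, by omega, ?_, hbm, by rw [Nat.sub_sub_self heN.le, mul_comm]⟩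
    rw [← pow_mul_pow_sub b heN.le] at hjN
    exact Nat.lt_of_mul_lt_mul_left hjN

theorem div_pow_eq_mul_pow_sub_div {K : Type*} [Field K] (x b : K) (hb : b ≠ 0)
    {n N : ℕ} (h : n ≤ N) : x / b ^ n = x * b ^ (N - n) / b ^ N := by
  rw [← pow_sub_mul_pow b h, ← div_div, mul_div_cancel_right₀ _ (pow_ne_zero _ hb)]

theorem topOrders_eq_grid_general (G N : ℕ) :
    {q : ℚ | ∃ n k : ℕ, 1 ≤ n ∧ n ≤ N ∧ 1 ≤ k ∧ k ≤ G * (G + 1) ^ (n - 1) ∧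
        q = ((k + (k - 1) / G : ℕ) : ℚ) / ((G : ℚ) + 1) ^ n} =
      {q : ℚ | ∃ j : ℕ, 1 ≤ j ∧ j ≤ (G + 1) ^ N - 1 ∧
        q = (j : ℚ) / ((G : ℚ) + 1) ^ N} := by
  have numerators (n m : ℕ) (hn : 1 ≤ n) :
      (∃ k, 1 ≤ k ∧ k ≤ G * (G + 1) ^ (n - 1) ∧ k + (k - 1) / G = m) ↔
        m < (G + 1) ^ n ∧ ¬ (G + 1) ∣ m := by
    rw [Nat.exists_add_pred_div_eq_iff, mul_pow_sub_one (by omega)]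
  have rescale (m n : ℕ) (h : n ≤ N) :
      (m : ℚ) / ((G : ℚ) + 1) ^ n = ((m * (G + 1) ^ (N - n) : ℕ) : ℚ) / ((G : ℚ) + 1) ^ N := by
    push_cast
    exact div_pow_eq_mul_pow_sub_div _ _ (by positivity) h
  ext q
  constructor
  · rintro ⟨n, k, hn, hnN, hk1, hkG, rfl⟩
    obtain ⟨hm, hdvd⟩ := (numerators n _ hn).1 ⟨k, hk1, hkG, rfl⟩
    obtain ⟨hj, hjN⟩ := (Nat.exists_not_dvd_mul_pow_eq_iff (G + 1) N _).1
      ⟨n, _, hn, hnN, hm, hdvd, rfl⟩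
    exact ⟨_, hj, by omega, rescale _ n hnN⟩
  · rintro ⟨j, hj, hjN, rfl⟩
    have hpow : 0 < (G + 1) ^ N := by positivity
    obtain ⟨n, m, hn, hnN, hm, hdvd, rfl⟩ :=
      (Nat.exists_not_dvd_mul_pow_eq_iff (G + 1) N j).2 ⟨hj, by omega⟩
    obtain ⟨k, hk1, hkG, rfl⟩ := (numerators n m hn).2 ⟨hm, hdvd⟩
    exact ⟨n, k, hn, hnN, hk1, hkG, (rescale _ n hnN).symm⟩

/-- The topological orders `T_G(n,k) = (k + ⌊(k−1)/G⌋)/(G+1)^n` of the points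
inserted during the first `N` iterations of the fractal construction are
exactly the grid points `j/(G+1)^N` for `1 ≤ j ≤ (G+1)^N − 1`; hence together
with the endpoints `0` and `1` the points of the intermediate curve `C^(N)`
form an equally spaced grid in `[0,1]` with spacing `1/(G+1)^N = T_G(N,1)`. -/
theorem topOrders_eq_grid (G N : ℕ) (hG : 1 ≤ G) (hN : 1 ≤ N) :
    {q : ℚ | ∃ n k : ℕ, 1 ≤ n ∧ n ≤ N ∧ 1 ≤ k ∧ k ≤ G * (G + 1) ^ (n - 1) ∧
        q = ((k + (k - 1) / G : ℕ) : ℚ) / ((G : ℚ) + 1) ^ n} =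
      {q : ℚ | ∃ j : ℕ, 1 ≤ j ∧ j ≤ (G + 1) ^ N - 1 ∧
        q = (j : ℚ) / ((G : ℚ) + 1) ^ N} :=
  topOrders_eq_grid_general G N
end

section
/- Let G ≥ 1 be an integer. The map (n,k) ↦ T_G(n,k) = (k + ⌊(k−1)/G⌋)/(G+1)^n is injective on the set of index pairs {(n,k) : n ≥ 1, 1 ≤ k ≤ G·(G+1)^(n−1)}; that is, distinct inserted points of the fractal construction receive distinct topological orders, so the topological order sorts the points of the fractal curve unambiguously. -/
/-!
Write `k - 1 = G q + r` with `r < G`. The numerator `k + ⌊(k-1)/G⌋ = (G+1) q + (r+1)` of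
`T_G(n,k)` is then never divisible by `G+1`, so `T_G(n,k)` is already in lowest terms with
respect to the base `G+1`, and its denominator `(G+1)^n` determines `n`. For fixed `n`,
injectivity in `k` follows because the numerator is strictly increasing in `k`.
-/

def orderNumerator (G k : ℕ) : ℕ := k + (k - 1) / G

theorem orderNumerator_mod {G k : ℕ} (hG : 0 < G) (hk : 1 ≤ k) :
    orderNumerator G k % (G + 1) = (k - 1) % G + 1 := by
  have hdecomp : orderNumerator G k = (G + 1) * ((k - 1) / G) + ((k - 1) % G + 1) := by
    have := Nat.div_add_mod (k - 1) G
    unfold orderNumerator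
    rw [add_mul, one_mul]
    omega
  rw [hdecomp, Nat.mul_add_mod, Nat.mod_eq_of_lt (by have := Nat.mod_lt (k - 1) hG; omega)]

theorem not_dvd_orderNumerator {G k : ℕ} (hG : 0 < G) (hk : 1 ≤ k) :
    ¬ (G + 1) ∣ orderNumerator G k := by
  rw [Nat.dvd_iff_mod_eq_zero, orderNumerator_mod hG hk]
  exact Nat.succ_ne_zero _

theorem orderNumerator_strictMono (G : ℕ) : StrictMono (orderNumerator G) := by
  intro k₁ k₂ hk
  have := Nat.div_le_div_right (c := G) (Nat.sub_le_sub_right hk.le 1)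
  unfold orderNumerator
  omega

theorem eq_and_eq_of_mul_pow_eq_mul_pow {b a c m n : ℕ} (hb : 0 < b) (ha : ¬ b ∣ a)
    (hc : ¬ b ∣ c) (h : a * b ^ n = c * b ^ m) : m = n ∧ a = c := by
  wlog hmn : m ≤ n generalizing a c m n
  · obtain ⟨hnm, hca⟩ := this hc ha h.symm (by omega)
    exact ⟨hnm.symm, hca.symm⟩
  have hcancel : a * b ^ (n - m) = c := by
    apply Nat.eq_of_mul_eq_mul_right (pow_pos hb m)
    rw [mul_assoc, ← pow_add, Nat.sub_add_cancel hmn, h]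
  obtain hlt | rfl := hmn.lt_or_eq
  · exact absurd (hcancel ▸ Dvd.dvd.mul_left (dvd_pow_self b (by omega)) a) hc
  · simpa using hcancel

theorem eq_and_eq_of_div_pow_eq_div_pow {b a c m n : ℕ} (hb : 0 < b) (ha : ¬ b ∣ a)
    (hc : ¬ b ∣ c) (h : (a : ℚ) / (b : ℚ) ^ m = (c : ℚ) / (b : ℚ) ^ n) : m = n ∧ a = c := by
  rw [div_eq_div_iff (by positivity) (by positivity)] at h
  exact eq_and_eq_of_mul_pow_eq_mul_pow hb ha hc (by exact_mod_cast h)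

/-- The topological order `T_G(n,k) = (k + ⌊(k−1)/G⌋)/(G+1)^n` is injective on
the set of index pairs `{(n,k) : n ≥ 1, 1 ≤ k ≤ G·(G+1)^(n−1)}`: distinct
inserted points of the fractal construction receive distinct topological
orders. -/
theorem topOrder_injective (G : ℕ) (hG : 1 ≤ G) :
    Set.InjOn
      (fun p : ℕ × ℕ =>
        ((p.2 + (p.2 - 1) / G : ℕ) : ℚ) / ((G : ℚ) + 1) ^ p.1)
      {p : ℕ × ℕ | 1 ≤ p.1 ∧ 1 ≤ p.2 ∧ p.2 ≤ G * (G + 1) ^ (p.1 - 1)} := by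
  rintro ⟨n₁, k₁⟩ ⟨-, hk₁, -⟩ ⟨n₂, k₂⟩ ⟨-, hk₂, -⟩ heq
  have heq' : (orderNumerator G k₁ : ℚ) / ((G + 1 : ℕ) : ℚ) ^ n₁
      = (orderNumerator G k₂ : ℚ) / ((G + 1 : ℕ) : ℚ) ^ n₂ := by
    push_cast
    exact heq
  obtain ⟨rfl, hnum⟩ := eq_and_eq_of_div_pow_eq_div_pow (Nat.succ_pos G)
    (not_dvd_orderNumerator hG hk₁) (not_dvd_orderNumerator hG hk₂) heq'
  obtain rfl : k₁ = k₂ := (orderNumerator_strictMono G).injective hnum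
  rfl
end
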